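/- Let x ∈ gl(n, ℂ) satisfy: x_i regular in gl(i,ℂ) for all i and z_{g_i}(x_i) ∩ z_{g_{i+1}}(x_{i+1}) = 0 for all 1 ≤ i ≤ n−1. Suppose A ∈ Z_{G_i}(x_i) ∩ Z_{G_{i+1}}(x_{i+1}). Then A − I ∈ z_{g_i}(x_i) ∩ z_{g_{i+1}}(x_{i+1}), and hence A = I. -/

import Mathlib

noncomputable section

open Matrix

/-- The cutoff `x_k`: the upper left `k × k` corner of `x`, viewed in `gl(n,ℂ)`. -/
def cutoff (n k : ℕ) (x : Matrix (Fin n) (Fin n) ℂ) : Matrix (Fin n) (Fin n) ℂ :=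
  fun a b => if a.1 < k ∧ b.1 < k then x a b else 0

/-- The subalgebra `g_i ⊂ gl(n,ℂ)` of matrices supported in the upper left `i × i` block. -/
def corner (n i : ℕ) : Submodule ℂ (Matrix (Fin n) (Fin n) ℂ) where
  carrier := {x | ∀ a b : Fin n, ¬(a.1 < i ∧ b.1 < i) → x a b = 0}
  add_mem' := by
    intro x y hx hy a b h
    simp [Matrix.add_apply, hx a b h, hy a b h]
  zero_mem' := by intro a b h; rfl
  smul_mem' := by
    intro c x hx a b h
    simp [Matrix.smul_apply, hx a b h]

/-- The centralizer of `y` in `gl(n,ℂ)`, as a subspace. -/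
def matCentralizer (n : ℕ) (y : Matrix (Fin n) (Fin n) ℂ) :
    Submodule ℂ (Matrix (Fin n) (Fin n) ℂ) :=
  LinearMap.ker (LinearMap.mulLeft ℂ y - LinearMap.mulRight ℂ y)

/-- `z_{g_i}(x_i)`: the centralizer of `x_i` inside `g_i`, viewed in `gl(n,ℂ)`. -/
def cornerCent (n i : ℕ) (x : Matrix (Fin n) (Fin n) ℂ) :
    Submodule ℂ (Matrix (Fin n) (Fin n) ℂ) :=
  corner n i ⊓ matCentralizer n (cutoff n i x)

/-- Membership in `G_i ⊂ GL(n,ℂ)`: agrees with the identity matrix outside the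
upper left `i × i` block. -/
def inGL (n i : ℕ) (g : Matrix (Fin n) (Fin n) ℂ) : Prop :=
  ∀ a b : Fin n, ¬(a.1 < i ∧ b.1 < i) → g a b = (1 : Matrix (Fin n) (Fin n) ℂ) a b

/-- Strong regularity, via the Kostant–Wallach characterization: each cutoff `x_i`
is regular in `g_i` and consecutive centralizers intersect trivially. -/
def StronglyRegularChar (n : ℕ) (x : Matrix (Fin n) (Fin n) ℂ) : Prop :=
  (∀ i, 1 ≤ i → i ≤ n → Module.finrank ℂ (cornerCent n i x) = i) ∧
  (∀ i, 1 ≤ i → i ≤ n - 1 → cornerCent n i x ⊓ cornerCent n (i + 1) x = ⊥)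

theorem mem_matCentralizer_iff {n : ℕ} {y z : Matrix (Fin n) (Fin n) ℂ} :
    z ∈ matCentralizer n y ↔ Commute y z := by
  simp only [matCentralizer, LinearMap.mem_ker, LinearMap.sub_apply, LinearMap.mulLeft_apply,
    LinearMap.mulRight_apply, sub_eq_zero]
  rfl

theorem inGL.mono {n i j : ℕ} {g : Matrix (Fin n) (Fin n) ℂ} (hg : inGL n i g) (hij : i ≤ j) :
    inGL n j g :=
  fun a b hab => hg a b fun ⟨ha, hb⟩ => hab ⟨ha.trans_le hij, hb.trans_le hij⟩

theorem inGL.sub_one_mem_corner {n i : ℕ} {g : Matrix (Fin n) (Fin n) ℂ} (hg : inGL n i g) :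
    g - 1 ∈ corner n i :=
  fun a b hab => by rw [Matrix.sub_apply, hg a b hab, sub_self]

theorem inGL.sub_one_mem_cornerCent {n i : ℕ} {x g : Matrix (Fin n) (Fin n) ℂ}
    (hg : inGL n i g) (hcomm : g * cutoff n i x = cutoff n i x * g) :
    g - 1 ∈ cornerCent n i x :=
  ⟨hg.sub_one_mem_corner,
    mem_matCentralizer_iff.mpr ((Commute.sub_left hcomm (Commute.one_left _)).symm)⟩

theorem stmt5_general (n : ℕ) (x : Matrix (Fin n) (Fin n) ℂ)
    (hint : ∀ i, 1 ≤ i → i ≤ n - 1 → cornerCent n i x ⊓ cornerCent n (i + 1) x = ⊥)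
    (i : ℕ) (h1 : 1 ≤ i) (h2 : i ≤ n - 1)
    (A : (Matrix (Fin n) (Fin n) ℂ)ˣ)
    (hAi : inGL n i (A : Matrix (Fin n) (Fin n) ℂ))
    (hci : (A : Matrix (Fin n) (Fin n) ℂ) * cutoff n i x =
      cutoff n i x * (A : Matrix (Fin n) (Fin n) ℂ))
    (hci1 : (A : Matrix (Fin n) (Fin n) ℂ) * cutoff n (i + 1) x =
      cutoff n (i + 1) x * (A : Matrix (Fin n) (Fin n) ℂ)) :
    (A : Matrix (Fin n) (Fin n) ℂ) - 1 ∈ cornerCent n i x ⊓ cornerCent n (i + 1) x ∧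
    (A : Matrix (Fin n) (Fin n) ℂ) = 1 := by
  have hmem : (A : Matrix (Fin n) (Fin n) ℂ) - 1 ∈ cornerCent n i x ⊓ cornerCent n (i + 1) x :=
    ⟨hAi.sub_one_mem_cornerCent hci, (hAi.mono i.le_succ).sub_one_mem_cornerCent hci1⟩
  refine ⟨hmem, sub_eq_zero.mp ?_⟩
  rwa [hint i h1 h2, Submodule.mem_bot] at hmem

/-- If `x_i` is regular for all `i` and `z_{g_i}(x_i) ∩ z_{g_{i+1}}(x_{i+1}) = 0`,
and `A ∈ Z_{G_i}(x_i) ∩ Z_{G_{i+1}}(x_{i+1})`, then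
`A − I ∈ z_{g_i}(x_i) ∩ z_{g_{i+1}}(x_{i+1})` and hence `A = I`. -/
theorem stmt5 (n : ℕ) (x : Matrix (Fin n) (Fin n) ℂ)
    (hreg : ∀ i, 1 ≤ i → i ≤ n → Module.finrank ℂ (cornerCent n i x) = i)
    (hint : ∀ i, 1 ≤ i → i ≤ n - 1 → cornerCent n i x ⊓ cornerCent n (i + 1) x = ⊥)
    (i : ℕ) (h1 : 1 ≤ i) (h2 : i ≤ n - 1)
    (A : (Matrix (Fin n) (Fin n) ℂ)ˣ)
    (hAi : inGL n i (A : Matrix (Fin n) (Fin n) ℂ))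
    (hci : (A : Matrix (Fin n) (Fin n) ℂ) * cutoff n i x =
      cutoff n i x * (A : Matrix (Fin n) (Fin n) ℂ))
    (hci1 : (A : Matrix (Fin n) (Fin n) ℂ) * cutoff n (i + 1) x =
      cutoff n (i + 1) x * (A : Matrix (Fin n) (Fin n) ℂ)) :
    (A : Matrix (Fin n) (Fin n) ℂ) - 1 ∈ cornerCent n i x ⊓ cornerCent n (i + 1) x ∧
    (A : Matrix (Fin n) (Fin n) ℂ) = 1 :=
  stmt5_general n x hint i h1 h2 A hAi hci hci1
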